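/- For every non-negative integer k and all non-negative integers m, n with 0 ≤ m ≤ 2^n - 1, we have a(m+1) + k·a(m) = a(2^k·m + 1), where a is Stern's diatomic sequence. -/
import Mathlib


/-- Stern's diatomic sequence: a(0)=0, a(1)=1, a(2m)=a(m), a(2m+1)=a(m)+a(m+1). -/
def stern : ℕ → ℕ
  | 0 => 0
  | 1 => 1
  | n + 2 =>
    if _h : n % 2 = 0 then stern (n / 2 + 1)
    else stern (n / 2 + 1) + stern (n / 2 + 2)
decreasing_by
  · omega
  · omega
  · omega

lemma stern_two_mul (m : ℕ) : stern (2 * m) = stern m := by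
  match m with
  | 0 => rfl
  | m + 1 =>
    have : 2 * (m + 1) = 2 * m + 2 := by ring
    rw [this, stern]
    have h1 : 2 * m % 2 = 0 := by omega
    have h2 : 2 * m / 2 = m := by omega
    rw [dif_pos h1, h2]

lemma stern_two_mul_add_one (m : ℕ) : stern (2 * m + 1) = stern m + stern (m + 1) := by
  match m with
  | 0 => simp [stern]
  | m + 1 =>
    have : 2 * (m + 1) + 1 = (2 * m + 1) + 2 := by ring
    rw [this, stern]
    have h1 : ¬ ((2 * m + 1) % 2 = 0) := by omega
    have h2 : (2 * m + 1) / 2 = m := by omega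
    rw [dif_neg h1, h2]

lemma stern_pow_two_mul (k m : ℕ) : stern (2 ^ k * m) = stern m := by
  induction k with
  | zero => simp
  | succ k ih =>
    have : 2 ^ (k + 1) * m = 2 * (2 ^ k * m) := by ring
    rw [this, stern_two_mul, ih]

theorem stern_formula_two (k m n : ℕ) (h : m ≤ 2 ^ n - 1) :
    stern (m + 1) + k * stern m = stern (2 ^ k * m + 1) := by
  induction k with
  | zero => simp
  | succ k ih =>
    have : 2 ^ (k + 1) * m = 2 * (2 ^ k * m) := by ring
    rw [this, stern_two_mul_add_one]
    rw [stern_pow_two_mul, ← ih]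
    ring
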